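/- The function R ↦ g_NA(z_NA(R), R) is decreasing on (0, ∞): if 0 < R1 ≤ R2 then g_NA(z_NA(R1), R1) ≥ g_NA(z_NA(R2), R2). -/

import Mathlib

/-!
Each row of `z` enters `g_NA` separately, and at the optimum `z_NA(R)` a row with costs `a, b`
contributes `1/(2a) + 1/(2b) - R / (1 + R (a + b)) / 2`. Since `R ↦ R / (1 + R s)` is increasing
on `[0, ∞)` for `s ≥ 0`, each row contribution, hence their sum, is decreasing in `R`.
-/

/-- The Principal's reduced objective `g_NA(z, R)` in the no-Planner (Nash) model. -/
noncomputable def gNA (k11 k12 k21 k22 : ℝ) (z : Fin 2 → Fin 2 → ℝ) (R : ℝ) : ℝ :=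
  -(R / 2) * (z 0 0 + z 0 1 - 1) ^ 2 - (R / 2) * (z 1 0 + z 1 1 - 1) ^ 2
    + z 0 0 / k11 + z 0 1 / k12 + z 1 0 / k21 + z 1 1 / k22
    - (z 0 0) ^ 2 / (2 * k11) - (z 0 1) ^ 2 / (2 * k12)
    - (z 1 0) ^ 2 / (2 * k21) - (z 1 1) ^ 2 / (2 * k22)

/-- The optimal sensitivities `z_NA(R)` in the no-Planner (Nash) model. -/
noncomputable def zNA (k11 k12 k21 k22 R : ℝ) : Fin 2 → Fin 2 → ℝ :=
  ![![(1 + R * k12) / (1 + R * (k11 + k12)), (1 + R * k11) / (1 + R * (k11 + k12))],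
    ![(1 + R * k22) / (1 + R * (k21 + k22)), (1 + R * k21) / (1 + R * (k21 + k22))]]

open Set

noncomputable def gRow (a b x y R : ℝ) : ℝ :=
  -(R / 2) * (x + y - 1) ^ 2 + x / a + y / b - x ^ 2 / (2 * a) - y ^ 2 / (2 * b)

noncomputable def gRowOpt (a b R : ℝ) : ℝ :=
  gRow a b ((1 + R * b) / (1 + R * (a + b))) ((1 + R * a) / (1 + R * (a + b))) R

theorem gNA_zNA_eq_gRowOpt_add_gRowOpt (k11 k12 k21 k22 R : ℝ) :
    gNA k11 k12 k21 k22 (zNA k11 k12 k21 k22 R) R = gRowOpt k11 k12 R + gRowOpt k21 k22 R := by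
  simp only [gNA, zNA, gRowOpt, gRow, Matrix.cons_val_zero, Matrix.cons_val_one]
  ring

theorem gRowOpt_eq {a b R : ℝ} (ha : a ≠ 0) (hb : b ≠ 0) (hD : 1 + R * (a + b) ≠ 0) :
    gRowOpt a b R = 1 / (2 * a) + 1 / (2 * b) - R / (1 + R * (a + b)) / 2 := by
  unfold gRowOpt gRow
  field_simp
  ring

theorem monotoneOn_div_one_add_mul {s : ℝ} (hs : 0 ≤ s) :
    MonotoneOn (fun R : ℝ => R / (1 + R * s)) (Ici 0) := by
  intro R₁ (hR₁ : 0 ≤ R₁) R₂ (hR₂ : 0 ≤ R₂) hR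
  have hD₁ : 0 < 1 + R₁ * s := by positivity
  have hD₂ : 0 < 1 + R₂ * s := by positivity
  dsimp only
  rw [div_le_div_iff₀ hD₁ hD₂]
  linarith

theorem antitoneOn_gRowOpt {a b : ℝ} (ha : 0 < a) (hb : 0 < b) :
    AntitoneOn (gRowOpt a b) (Ici 0) := by
  intro R₁ (hR₁ : 0 ≤ R₁) R₂ (hR₂ : 0 ≤ R₂) hR
  have hmono : R₁ / (1 + R₁ * (a + b)) ≤ R₂ / (1 + R₂ * (a + b)) :=
    monotoneOn_div_one_add_mul (add_pos ha hb).le hR₁ hR₂ hR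
  rw [gRowOpt_eq ha.ne' hb.ne' (by positivity), gRowOpt_eq ha.ne' hb.ne' (by positivity)]
  linarith

/-- `R ↦ g_NA(z_NA(R), R)` is decreasing on `(0, ∞)`: if `0 < R1 ≤ R2` then
`g_NA(z_NA(R1), R1) ≥ g_NA(z_NA(R2), R2)`. -/
theorem gNA_zNA_antitone (k11 k12 k21 k22 : ℝ)
    (hk11 : 0 < k11) (hk12 : 0 < k12) (hk21 : 0 < k21) (hk22 : 0 < k22)
    (R1 R2 : ℝ) (hR1 : 0 < R1) (hR12 : R1 ≤ R2) :
    gNA k11 k12 k21 k22 (zNA k11 k12 k21 k22 R2) R2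
      ≤ gNA k11 k12 k21 k22 (zNA k11 k12 k21 k22 R1) R1 := by
  rw [gNA_zNA_eq_gRowOpt_add_gRowOpt, gNA_zNA_eq_gRowOpt_add_gRowOpt]
  exact ((antitoneOn_gRowOpt hk11 hk12).add (antitoneOn_gRowOpt hk21 hk22))
    hR1.le (hR1.le.trans hR12) hR12
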